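/- Let M : Matrix (Fin n) (Fin n) ℝ be symmetric positive definite, and suppose A : Matrix (Fin n) (Fin n) ℝ satisfies M·A + Aᵀ·M + 2λM ≼ 0 (negative semidefinite) for some λ > 0. Then for any solution δ : ℝ → ℝⁿ of the linear ODE δ'(t) = A δ(t), the function V(t) = δ(t)ᵀ M δ(t) satisfies V(t) ≤ V(0) · exp(-2λt) for all t ≥ 0. -/

import Mathlib

/-!
Along a solution, `V' = δᵀ (M A + Aᵀ M) δ ≤ -2λ V` by the matrix inequality, and Grönwall's
inequality turns this differential inequality into `V t ≤ V 0 · exp (-2λ t)`.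
-/

open Matrix

theorem le_mul_exp_of_hasDerivAt_le_mul {f f' : ℝ → ℝ} {K a t : ℝ}
    (hf : ∀ x, HasDerivAt f (f' x) x) (bound : ∀ x, f' x ≤ K * f x) (ht : a ≤ t) :
    f t ≤ f a * Real.exp (K * (t - a)) := by
  rw [← gronwallBound_ε0]
  refine le_gronwallBound_of_liminf_deriv_right_le (f' := f') (b := t)
    (fun x _ => (hf x).continuousAt.continuousWithinAt)
    (fun x _ _ hr => (hf x).hasDerivWithinAt.liminf_right_slope_le hr) le_rfl
    (fun x _ => by simpa using bound x) t ⟨ht, le_rfl⟩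

section Derivatives

variable {𝕜 ι : Type*} [NontriviallyNormedField 𝕜] [Fintype ι] {f g : 𝕜 → ι → 𝕜}
  {f' g' : ι → 𝕜} {x : 𝕜}

theorem HasDerivAt.dotProduct (hf : HasDerivAt f f' x) (hg : HasDerivAt g g' x) :
    HasDerivAt (fun t => f t ⬝ᵥ g t) (f' ⬝ᵥ g x + f x ⬝ᵥ g') x := by
  simpa only [_root_.dotProduct, Finset.sum_add_distrib] using HasDerivAt.fun_sum fun i _ =>
    (hasDerivAt_pi.mp hf i).fun_mul (hasDerivAt_pi.mp hg i)

theorem HasDerivAt.mulVec {κ : Type*} [Fintype κ] (M : Matrix κ ι 𝕜) (hf : HasDerivAt f f' x) :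
    HasDerivAt (fun t => M *ᵥ f t) (M *ᵥ f') x :=
  hasDerivAt_pi.mpr fun i => by
    simpa only [Matrix.mulVec, zero_dotProduct, zero_add] using
      (hasDerivAt_const x (M i)).dotProduct hf

end Derivatives

theorem dotProduct_mul_add_transpose_mul_add_smul_mulVec {ι R : Type*} [Fintype ι]
    [CommSemiring R] (M A : Matrix ι ι R) (c : R) (v : ι → R) :
    v ⬝ᵥ ((M * A + Aᵀ * M + c • M) *ᵥ v) =
      (A *ᵥ v) ⬝ᵥ (M *ᵥ v) + v ⬝ᵥ (M *ᵥ (A *ᵥ v)) + c * (v ⬝ᵥ (M *ᵥ v)) := by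
  rw [add_mulVec, add_mulVec, smul_mulVec, ← mulVec_mulVec, ← mulVec_mulVec, dotProduct_add,
    dotProduct_add, dotProduct_smul, smul_eq_mul, dotProduct_mulVec v Aᵀ, vecMul_transpose]
  ring

theorem stmt12_general (n : ℕ) (M A : Matrix (Fin n) (Fin n) ℝ) (lam : ℝ)
    (hLMI : ∀ x : Fin n → ℝ, x ⬝ᵥ ((M * A + Aᵀ * M + (2 * lam) • M) *ᵥ x) ≤ 0)
    (δ : ℝ → (Fin n → ℝ))
    (hδ : ∀ t : ℝ, HasDerivAt δ (A *ᵥ δ t) t) :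
    ∀ t ≥ (0 : ℝ), δ t ⬝ᵥ (M *ᵥ δ t) ≤ (δ 0 ⬝ᵥ (M *ᵥ δ 0)) * Real.exp (-2 * lam * t) := by
  have hV : ∀ t, HasDerivAt (fun s => δ s ⬝ᵥ (M *ᵥ δ s))
      ((A *ᵥ δ t) ⬝ᵥ (M *ᵥ δ t) + δ t ⬝ᵥ (M *ᵥ (A *ᵥ δ t))) t :=
    fun t => (hδ t).dotProduct ((hδ t).mulVec M)
  have hdecay : ∀ t, (A *ᵥ δ t) ⬝ᵥ (M *ᵥ δ t) + δ t ⬝ᵥ (M *ᵥ (A *ᵥ δ t)) ≤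
      -2 * lam * (δ t ⬝ᵥ (M *ᵥ δ t)) := fun t => by
    have := hLMI (δ t)
    rw [dotProduct_mul_add_transpose_mul_add_smul_mulVec] at this
    linarith
  intro t ht
  simpa only [sub_zero] using le_mul_exp_of_hasDerivAt_le_mul hV hdecay ht

theorem stmt12 (n : ℕ) (M A : Matrix (Fin n) (Fin n) ℝ) (lam : ℝ) (hlam : 0 < lam)
    (hM : M.PosDef) (hMsym : M.IsSymm)
    (hLMI : ∀ x : Fin n → ℝ, x ⬝ᵥ ((M * A + Aᵀ * M + (2 * lam) • M) *ᵥ x) ≤ 0)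
    (δ : ℝ → (Fin n → ℝ))
    (hδ : ∀ t : ℝ, HasDerivAt δ (A *ᵥ δ t) t) :
    ∀ t ≥ (0 : ℝ), δ t ⬝ᵥ (M *ᵥ δ t) ≤ (δ 0 ⬝ᵥ (M *ᵥ δ 0)) * Real.exp (-2 * lam * t) :=
  stmt12_general n M A lam hLMI δ hδ
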